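/- arXiv:1306.1915 — 9 statements merged into one kernel-verified Lean document; each statement's English description precedes it below -/
import Mathlib

section
/- Let A and B be C*-subalgebras of a C*-algebra D. If A ⊆ B and the Kadison–Kastler distance d(A,B) < 1, then A = B. -/
/-- The Kadison–Kastler distance between two subsets of a normed space:
the Hausdorff distance between their closed unit balls. -/
noncomputable def KKdist {D : Type*} [NormedRing D] (A B : Set D) : ℝ :=
  Metric.hausdorffDist (A ∩ Metric.closedBall 0 1) (B ∩ Metric.closedBall 0 1)

theorem stmt0 {D : Type*} [NormedRing D] [StarRing D] [CStarRing D]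
    [NormedAlgebra ℂ D] [StarModule ℂ D] [CompleteSpace D]
    (A B : NonUnitalStarSubalgebra ℂ D)
    (hAclosed : IsClosed (A : Set D)) (hBclosed : IsClosed (B : Set D))
    (hAB : A ≤ B) (hd : KKdist (A : Set D) (B : Set D) < 1) : A = B := by
  refine le_antisymm hAB fun b hb => ?_
  have hAne : (A : Set D).Nonempty := ⟨0, A.zero_mem⟩
  -- set k strictly between the distance and 1
  set δ := KKdist (A : Set D) (B : Set D) with hδ
  have hδ0 : 0 ≤ δ := Metric.hausdorffDist_nonneg
  set k : ℝ := (δ + 1) / 2 with hk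
  have hk1 : k < 1 := by simp [hk]; linarith
  have hk0 : 0 ≤ k := by positivity
  have hdk : δ < k := by simp [hk]; linarith
  have hne : EMetric.hausdorffEdist ((A : Set D) ∩ Metric.closedBall 0 1)
      ((B : Set D) ∩ Metric.closedBall 0 1) ≠ ⊤ := by
    apply Metric.hausdorffEdist_ne_top_of_nonempty_of_bounded
    · exact ⟨0, A.zero_mem, Metric.mem_closedBall_self zero_le_one⟩
    · exact ⟨0, B.zero_mem, Metric.mem_closedBall_self zero_le_one⟩
    · exact Metric.isBounded_closedBall.subset Set.inter_subset_right
    · exact Metric.isBounded_closedBall.subset Set.inter_subset_right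
  set r := Metric.infDist b (A : Set D) with hr
  have hr0 : 0 ≤ r := Metric.infDist_nonneg
  have key : ∀ ε > 0, r ≤ k * r + ε := by
    intro ε hε
    obtain ⟨a, ha, hba⟩ : ∃ a ∈ (A : Set D), dist b a < r + ε :=
      (Metric.infDist_lt_iff hAne).mp (by linarith)
    set t := ‖b - a‖ with ht
    have htd : dist b a = t := by rw [dist_eq_norm]
    rcases eq_or_lt_of_le (norm_nonneg (b - a)) with h0 | h0
    · have : r ≤ 0 := by
        calc r ≤ dist b a := Metric.infDist_le_dist_of_mem ha
        _ = t := htd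
        _ = 0 := h0.symm
      nlinarith
    · set c := ((t : ℂ))⁻¹ • (b - a) with hc
      have htC : ‖(t : ℂ)‖ = t := by
        simp [Complex.norm_real, abs_of_pos h0]; exact h0.le
      have hcn : ‖c‖ = 1 := by
        rw [hc, norm_smul, norm_inv, htC, inv_mul_cancel₀ (ne_of_gt h0)]
      have hcB : c ∈ (B : Set D) ∩ Metric.closedBall 0 1 := by
        refine ⟨B.smul_mem _ (sub_mem hb (hAB ha)), ?_⟩
        rw [mem_closedBall_zero_iff, hcn]
      obtain ⟨a', ha', hca'⟩ :=
        Metric.exists_dist_lt_of_hausdorffDist_lt' hcB (lt_of_le_of_lt (le_of_eq rfl) hdk) hne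
      have ha'A : a' ∈ (A : Set D) := ha'.1
      have ha'' : a + (t : ℂ) • a' ∈ (A : Set D) := A.add_mem ha (A.smul_mem _ ha'A)
      have hexp : b - (a + (t : ℂ) • a') = (t : ℂ) • (c - a') := by
        rw [hc, smul_sub, smul_inv_smul₀ (by exact_mod_cast ne_of_gt h0)]
        abel
      have : r ≤ dist b (a + (t : ℂ) • a') := Metric.infDist_le_dist_of_mem ha''
      rw [dist_eq_norm, hexp, norm_smul, htC] at this
      have h1 : t * ‖c - a'‖ ≤ t * k := by
        apply mul_le_mul_of_nonneg_left _ (le_of_lt h0)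
        rw [← dist_eq_norm, dist_comm]
        exact le_of_lt hca'
      have h2 : t * k ≤ (r + ε) * k := by
        apply mul_le_mul_of_nonneg_right _ hk0
        linarith [htd ▸ hba]
      nlinarith
  have hr_le : r ≤ k * r := le_of_forall_pos_le_add key
  have hrz : r = 0 := by nlinarith
  have : b ∈ closure (A : Set D) :=
    (Metric.mem_closure_iff_infDist_zero hAne).mpr hrz
  rwa [hAclosed.closure_eq] at this
end

section
/- Let A be a unital C*-algebra and x ∈ A an invertible element with ‖x − 1‖ < 1. If u is the unitary in the polar decomposition x = u|x|, then ‖u − 1‖ ≤ √2 · ‖x − 1‖. -/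
section aux
variable {A : Type*} [NormedRing A] [StarRing A] [CStarRing A]
    [NormedAlgebra ℂ A] [StarModule ℂ A] [CompleteSpace A]
    [PartialOrder A] [StarOrderedRing A]

/-- An element with real part bounded below by a positive constant is invertible. -/
lemma aux_isUnit_of_re (y : A) (d : ℝ) (hd : 0 < d)
    (h : ((2*d : ℝ)) • (1:A) ≤ y + star y) : IsUnit y := by
  letI : CStarAlgebra A := { }
  cases subsingleton_or_nontrivial A with
  | inl hsub => exact isUnit_of_subsingleton y
  | inr hnt => ?_
  set N := ‖y‖ with hN
  have hN0 : 0 ≤ N := norm_nonneg y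
  set t : ℝ := d / ((N+d)^2 + d^2) with ht
  have htpos : 0 < t := div_pos hd (by positivity)
  set k := y + star y with hk
  have hksa : IsSelfAdjoint k := by
    simp [hk, IsSelfAdjoint, star_add, add_comm]
  have hknorm : ‖k‖ ≤ 2*N := by
    calc ‖k‖ ≤ ‖y‖ + ‖star y‖ := norm_add_le _ _
    _ = 2*N := by rw [norm_star]; ring
  have h1A : (0:A) ≤ 1 := zero_le_one
  have hub : (1:A) - t • k ≤ (1 - 2*t*d) • (1:A) := by
    have h2 : (t * (2*d)) • (1:A) ≤ t • k := by
      have := smul_le_smul_of_nonneg_left h htpos.le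
      rwa [smul_smul] at this
    calc (1:A) - t • k ≤ (1:A) - (t * (2*d)) • (1:A) := sub_le_sub_left h2 1
    _ = (1 - 2*t*d) • (1:A) := by rw [sub_smul, one_smul]; ring_nf
  have hlb : (0:A) ≤ 1 - t • k := by
    have hk1 : k ≤ ‖k‖ • (1:A) := by
      have h0 := hksa.le_algebraMap_norm_self
      rwa [Algebra.algebraMap_eq_smul_one] at h0
    have h2 : t • k ≤ (t * ‖k‖) • (1:A) := by
      have := smul_le_smul_of_nonneg_left hk1 htpos.le
      rwa [smul_smul] at this
    have h3 : (t * ‖k‖) • (1:A) ≤ (1:ℝ) • (1:A) := by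
      apply smul_le_smul_of_nonneg_right _ h1A
      have h4 : t * ‖k‖ ≤ t * (2*N) := mul_le_mul_of_nonneg_left hknorm htpos.le
      have ht2 : t * (2*N) ≤ 1 := by
        rw [ht, div_mul_eq_mul_div, div_le_one (by positivity)]
        nlinarith [sq_nonneg N, sq_nonneg (N - d)]
      linarith
    have h5 := h2.trans h3
    rw [one_smul] at h5
    exact sub_nonneg.mpr h5
  have htd : 2*t*d ≤ 1 := by
    rw [ht, show 2 * (d / ((N+d)^2+d^2)) * d = 2*d*d/((N+d)^2+d^2) by ring,
      div_le_one (by positivity)]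
    nlinarith [sq_nonneg N, hN0, hd]
  have hnorm1 : ‖(1:A) - t • k‖ ≤ 1 - 2*t*d := by
    have := CStarAlgebra.norm_le_norm_of_nonneg_of_le hlb hub
    calc ‖(1:A) - t•k‖ ≤ ‖(1 - 2*t*d) • (1:A)‖ := this
    _ = |1 - 2*t*d| * ‖(1:A)‖ := by rw [norm_smul]; simp [Real.norm_eq_abs]
    _ ≤ 1 - 2*t*d := by rw [norm_one, mul_one, abs_of_nonneg (by linarith)]
  have hexpand : star ((1:A) - t • y) * ((1:A) - t • y)
      = (1 - t • k) + (t*t) • (star y * y) := by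
    rw [hk]
    simp only [star_sub, star_smul, star_one, star_trivial]
    simp only [sub_mul, mul_sub, one_mul, mul_one, smul_mul_assoc, mul_smul_comm,
      smul_smul, smul_sub, smul_add]
    abel
  have hnormsq : ‖(1:A) - t • y‖ * ‖(1:A) - t • y‖ ≤ 1 - 2*t*d + t*t*(N*N) := by
    rw [← CStarRing.norm_star_mul_self, hexpand]
    calc ‖(1 - t•k) + (t*t) • (star y * y)‖
        ≤ ‖(1:A) - t•k‖ + ‖(t*t) • (star y * y)‖ := norm_add_le _ _
    _ ≤ (1 - 2*t*d) + t*t*(N*N) := by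
        refine add_le_add hnorm1 ?_
        rw [norm_smul, Real.norm_eq_abs, abs_of_nonneg (by positivity),
          CStarRing.norm_star_mul_self]
  have hlt : ‖(1:A) - t • y‖ < 1 := by
    have hq : t*(N*N) < 2*d := by
      have hNd : N*N ≤ (N+d)^2 := by nlinarith
      rw [ht, div_mul_eq_mul_div, div_lt_iff₀ (by positivity)]
      nlinarith [mul_le_mul_of_nonneg_left hNd hd.le, mul_pos hd (mul_pos hd hd)]
    nlinarith [norm_nonneg ((1:A) - t • y), htpos]
  have hty : IsUnit (t • y) := by
    have := (Units.oneSub ((1:A) - t • y) hlt).isUnit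
    simpa using this
  obtain ⟨w, hw⟩ := hty
  refine ⟨⟨y, t • ↑w⁻¹, ?_, ?_⟩, rfl⟩
  · have : (t • y) * ↑w⁻¹ = 1 := by rw [← hw]; exact w.mul_inv
    calc y * (t • ↑w⁻¹) = (t • y) * ↑w⁻¹ := by
          rw [smul_mul_assoc, mul_smul_comm]
    _ = 1 := this
  · have : (↑w⁻¹ : A) * (t • y) = 1 := by rw [← hw]; exact w.inv_mul
    calc (t • ↑w⁻¹ : A) * y = ↑w⁻¹ * (t • y) := by
          rw [smul_mul_assoc, mul_smul_comm]
    _ = 1 := this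
end aux

open scoped ComplexOrder

/-- If `x` is invertible with `‖x - 1‖ < 1`, and `x = u * a` is the polar decomposition of `x`
(so `a = |x|` is the positive square root of `x* x` and `u` is unitary), then
`‖u - 1‖ ≤ √2 ‖x - 1‖`. -/
theorem stmt1 {A : Type*} [NormedRing A] [StarRing A] [CStarRing A]
    [NormedAlgebra ℂ A] [StarModule ℂ A] [CompleteSpace A]
    [PartialOrder A] [StarOrderedRing A]
    (x a u : A) (hinv : IsUnit x) (hx : ‖x - 1‖ < 1)
    (hu : u ∈ unitary A) (ha : 0 ≤ a) (hsq : a * a = star x * x)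
    (hpolar : x = u * a) :
    ‖u - 1‖ ≤ Real.sqrt 2 * ‖x - 1‖ := by
  letI : CStarAlgebra A := { }
  rcases subsingleton_or_nontrivial A with hsub | hnt
  · rw [show u - 1 = 0 from Subsingleton.elim _ _, norm_zero]
    positivity
  have hu1 : star u * u = 1 := hu.1
  have hu2 : u * star u = 1 := hu.2
  have hnormal : IsStarNormal u := ⟨by rw [Commute, SemiconjBy, hu1, hu2]⟩
  set ε := ‖x - 1‖ with hε
  have hε0 : 0 ≤ ε := norm_nonneg _
  set β : ℝ := 1 - ε^2 with hβ
  have hβpos : 0 < β := by nlinarith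
  have hβ1 : β ≤ 1 := by nlinarith
  have hsb : β ≤ Real.sqrt β := (Real.le_sqrt hβpos.le hβpos.le).mpr (by nlinarith)
  have hsb1 : Real.sqrt β ≤ 1 := by
    have h1 := Real.sqrt_le_sqrt hβ1
    rwa [Real.sqrt_one] at h1
  have hasa : IsSelfAdjoint a := .of_nonneg ha
  -- `a` is a unit
  have haU : IsUnit a := by
    have h2 : IsUnit (a * a) := by rw [hsq]; exact hinv.star.mul hinv
    have hba : (↑h2.unit⁻¹ * a) * a = 1 := by rw [mul_assoc]; exact h2.val_inv_mul
    have hac : a * (a * ↑h2.unit⁻¹) = 1 := by rw [← mul_assoc]; exact h2.mul_val_inv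
    have heq : (↑h2.unit⁻¹ * a : A) = a * ↑h2.unit⁻¹ := by
      calc (↑h2.unit⁻¹ * a : A) = (↑h2.unit⁻¹ * a) * (a * (a * ↑h2.unit⁻¹)) := by
            rw [hac, mul_one]
      _ = ((↑h2.unit⁻¹ * a) * a) * (a * ↑h2.unit⁻¹) := by noncomm_ring
      _ = a * ↑h2.unit⁻¹ := by rw [hba, one_mul]
    exact ⟨⟨a, a * ↑h2.unit⁻¹, hac, by rw [← heq]; exact hba⟩, rfl⟩
  -- spectrum of `a` is strictly positive
  have hspec : ∀ t ∈ spectrum ℝ a, 0 < t := by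
    intro t htmem
    rcases (spectrum_nonneg_of_nonneg ha htmem).lt_or_eq with h | h
    · exact h
    · exact (((spectrum.zero_mem_iff (R := ℝ)).mp (h ▸ htmem)) haU).elim
  -- the key inequality `a² + β ≤ u a + a u*`
  have hxs : star x = a * star u := by rw [hpolar, star_mul, hasa.star_eq]
  have hkey : a*a + β • (1:A) ≤ u*a + a*(star u) := by
    have h1 : star (x-1) * (x-1) ≤ (ε^2) • (1:A) := by
      have h0 := (IsSelfAdjoint.star_mul_self (x-1)).le_algebraMap_norm_self
      rw [Algebra.algebraMap_eq_smul_one, CStarRing.norm_star_mul_self] at h0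
      rw [show ε^2 = ‖x-1‖ * ‖x-1‖ by rw [hε]; ring]
      exact h0
    have h2 : star (x-1) * (x-1) = (a*a + 1) - (u*a + a*(star u)) := by
      have e1 : star x * x = a * a := by
        rw [hxs, hpolar, show a * star u * (u * a) = a * (star u * u) * a by noncomm_ring,
          hu1, mul_one]
      calc star (x-1) * (x-1) = star x * x - star x - x + 1 := by
            rw [star_sub, star_one, sub_mul, mul_sub, mul_sub]
            simp only [one_mul, mul_one]; abel
      _ = (a*a + 1) - (u*a + a*(star u)) := by rw [e1, hxs, hpolar]; abel
    rw [h2] at h1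
    have h3 := sub_le_iff_le_add.mp h1
    calc a*a + β • (1:A) = ((a*a + 1) - ε^2 • 1) := by
          rw [hβ, sub_smul, one_smul]; abel
    _ ≤ (ε^2 • 1 + (u*a + a*(star u))) - ε^2 • 1 := sub_le_sub_right h3 _
    _ = u*a + a*(star u) := by abel
  -- functional calculus elements r = a^{-1/2}, s = a^{1/2}
  set r := cfc (fun t : ℝ => (Real.sqrt t)⁻¹) a with hr
  set s := cfc Real.sqrt a with hs
  have hcont_r : ContinuousOn (fun t:ℝ => (Real.sqrt t)⁻¹) (spectrum ℝ a) :=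
    ContinuousOn.inv₀ Real.continuous_sqrt.continuousOn
      (fun t htm => (Real.sqrt_pos.mpr (hspec t htm)).ne')
  have hcont_s : ContinuousOn Real.sqrt (spectrum ℝ a) := Real.continuous_sqrt.continuousOn
  have hrsa : IsSelfAdjoint r := cfc_predicate _ a
  have hssa : IsSelfAdjoint s := cfc_predicate _ a
  have hrs : r * s = 1 := by
    rw [hr, hs, ← cfc_mul _ _ a hcont_r hcont_s, ← cfc_one (R := ℝ) a]
    exact cfc_congr (fun t htm => by
      show _ = (1:ℝ)
      field_simp [(Real.sqrt_pos.mpr (hspec t htm)).ne'])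
  have hsr : s * r = 1 := by
    rw [hr, hs, ← cfc_mul _ _ a hcont_s hcont_r, ← cfc_one (R := ℝ) a]
    exact cfc_congr (fun t htm => by
      show _ = (1:ℝ)
      field_simp [(Real.sqrt_pos.mpr (hspec t htm)).ne'])
  have har : a * r = s := by
    conv_lhs => rw [← cfc_id ℝ a]
    rw [hr, hs, ← cfc_mul _ _ a continuous_id.continuousOn hcont_r]
    exact cfc_congr (fun t htm => by
      have h := hspec t htm
      rw [id_eq, ← Real.mul_self_sqrt h.le]
      field_simp; rw [Real.sqrt_sq (Real.sqrt_nonneg t)])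
  have hra : r * a = s := by
    conv_lhs => rw [← cfc_id ℝ a]
    rw [hr, hs, ← cfc_mul _ _ a hcont_r continuous_id.continuousOn]
    exact cfc_congr (fun t htm => by
      have h := hspec t htm
      rw [id_eq, ← Real.mul_self_sqrt h.le]
      field_simp; rw [Real.sqrt_sq (Real.sqrt_nonneg t)])
  have hss : s * s = a := by
    conv_rhs => rw [← cfc_id ℝ a]
    rw [hs, ← cfc_mul _ _ a hcont_s hcont_s]
    exact cfc_congr (fun t htm => Real.mul_self_sqrt (hspec t htm).le)
  have hrar : r * (a*a) * r = a := by
    calc r * (a*a) * r = (r*a)*(a*r) := by noncomm_ring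
    _ = s * s := by rw [hra, har]
    _ = a := hss
  have hrr : r * r = cfc (fun t:ℝ => t⁻¹) a := by
    rw [hr, ← cfc_mul _ _ a hcont_r hcont_r]
    exact cfc_congr (fun t htm => by
      rw [← mul_inv, Real.mul_self_sqrt (hspec t htm).le])
  have hci : ContinuousOn (fun t:ℝ => t⁻¹) (spectrum ℝ a) :=
    ContinuousOn.inv₀ continuous_id.continuousOn (fun t htm => (hspec t htm).ne')
  -- `2√β ≤ a + β a⁻¹`
  have e1 : cfc (fun t:ℝ => t + β * t⁻¹) a = a + β • (r * r) := by
    rw [cfc_add a (fun t : ℝ => t) (fun t : ℝ => β * t⁻¹) continuousOn_id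
      (continuousOn_const.mul hci),
      cfc_id' ℝ a, cfc_const_mul β _ a hci, ← hrr]
  have hwone : (2*Real.sqrt β) • (1:A) ≤ a + β • (r*r) := by
    have h0 : ((2*Real.sqrt β) • (1:A)) = cfc (fun _:ℝ => 2*Real.sqrt β) a := by
      rw [cfc_const _ a, Algebra.algebraMap_eq_smul_one]
    rw [h0, ← e1]
    refine cfc_mono (fun t htm => ?_) continuousOn_const
      (continuousOn_id.add (continuousOn_const.mul hci))
    have h := hspec t htm
    have key : 2*Real.sqrt β * t ≤ t*t + β := by
      nlinarith [sq_nonneg (t - Real.sqrt β), Real.sq_sqrt hβpos.le]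
    calc 2*Real.sqrt β = (2*Real.sqrt β * t) / t := by field_simp
    _ ≤ (t*t + β)/t := div_le_div_of_nonneg_right key h.le
    _ = t + β * t⁻¹ := by field_simp; try ring
  -- conjugate the key inequality by r
  have hconj := star_left_conjugate_le_conjugate hkey r
  rw [hrsa.star_eq] at hconj
  set v := r * u * s with hv
  have hstarv : star v = s * star u * r := by
    rw [hv, star_mul, star_mul, hrsa.star_eq, hssa.star_eq, mul_assoc]
  have hL : r * (a*a + β • (1:A)) * r = a + β • (r*r) := by
    rw [mul_add, add_mul, hrar]
    congr 1
    calc r * (β • (1:A)) * r = β • (r * 1 * r) := by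
          rw [mul_smul_comm, smul_mul_assoc]
    _ = β • (r * r) := by rw [mul_one]
  have hR : r * (u*a + a*star u) * r = v + star v := by
    rw [mul_add, add_mul, hstarv, hv]
    congr 1
    · calc r * (u*a) * r = r * u * (a * r) := by noncomm_ring
      _ = r * u * s := by rw [har]
    · calc r * (a * star u) * r = (r*a) * (star u * r) := by noncomm_ring
      _ = s * (star u * r) := by rw [hra]
      _ = s * star u * r := by rw [mul_assoc]
  have hvlow : (2*Real.sqrt β) • (1:A) ≤ v + star v := by
    calc (2*Real.sqrt β) • (1:A) ≤ a + β • (r*r) := hwone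
    _ = r * (a*a + β • 1) * r := hL.symm
    _ ≤ r * (u*a + a*star u) * r := hconj
    _ = v + star v := hR
  -- spectrum of u is contained in { z : √β ≤ Re z }
  have hspecv : spectrum ℂ v = spectrum ℂ u := by
    have hveq : v = ↑(⟨r, s, hrs, hsr⟩ : Aˣ) * u * ↑(⟨r, s, hrs, hsr⟩ : Aˣ)⁻¹ := rfl
    rw [hveq, spectrum.units_conjugate]
  have hspecu : ∀ z ∈ spectrum ℂ u, Real.sqrt β ≤ z.re := by
    intro z hz
    by_contra hlt
    push_neg at hlt
    have hd : 0 < Real.sqrt β - z.re := by linarith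
    have e2 : algebraMap ℂ A z + star (algebraMap ℂ A z) = ((2*z.re : ℝ)) • (1:A) := by
      rw [← algebraMap_star_comm, ← map_add, Complex.star_def, Complex.add_conj,
        show ((2*z.re:ℝ):ℂ) = algebraMap ℝ ℂ (2*z.re) from rfl,
        ← IsScalarTower.algebraMap_apply ℝ ℂ A, Algebra.algebraMap_eq_smul_one]
    have hy : ((2*(Real.sqrt β - z.re)) : ℝ) • (1:A) ≤
        (v - algebraMap ℂ A z) + star (v - algebraMap ℂ A z) := by
      rw [star_sub]
      have e3 : (v - algebraMap ℂ A z) + (star v - star (algebraMap ℂ A z))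
          = (v + star v) - (algebraMap ℂ A z + star (algebraMap ℂ A z)) := by abel
      rw [e3, e2]
      calc ((2*(Real.sqrt β - z.re)) : ℝ) • (1:A)
          = (2*Real.sqrt β) • (1:A) - (2*z.re) • (1:A) := by
            rw [← sub_smul]; congr 1; ring
      _ ≤ (v + star v) - (2*z.re) • (1:A) := sub_le_sub_right hvlow _
    have hyu : IsUnit (v - algebraMap ℂ A z) := by
      exact aux_isUnit_of_re _ (Real.sqrt β - z.re) hd hy
    have hzv : z ∈ spectrum ℂ v := hspecv.symm ▸ hz
    rw [spectrum.mem_iff] at hzv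
    exact hzv (by simpa [neg_sub] using hyu.neg)
  -- hence u + u* ≥ 2√β
  have hcfc : (0:A) ≤ cfc (fun z : ℂ => z + star z - ((2*Real.sqrt β:ℝ):ℂ)) u := by
    apply cfc_nonneg
    intro z hz
    have h1 := hspecu z hz
    have e3 : z + star z - ((2*Real.sqrt β:ℝ):ℂ) = ((2*z.re - 2*Real.sqrt β : ℝ):ℂ) := by
      rw [Complex.star_def, Complex.add_conj]; push_cast; ring
    rw [e3]
    exact Complex.zero_le_real.mpr (by linarith)
  have hueq : cfc (fun z : ℂ => z + star z - ((2*Real.sqrt β:ℝ):ℂ)) u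
      = u + star u - (2*Real.sqrt β) • 1 := by
    rw [cfc_sub (fun z : ℂ => z + star z) (fun _ : ℂ => ((2*Real.sqrt β:ℝ):ℂ)) u
        (continuousOn_id.add continuous_star.continuousOn) continuousOn_const,
      cfc_add u (fun z : ℂ => z) (fun z : ℂ => star z) continuousOn_id
        continuous_star.continuousOn,
      cfc_id' ℂ u hnormal, cfc_star_id u hnormal, cfc_const _ u hnormal,
      show ((2*Real.sqrt β:ℝ):ℂ) = algebraMap ℝ ℂ (2*Real.sqrt β) from rfl,
      ← IsScalarTower.algebraMap_apply ℝ ℂ A, Algebra.algebraMap_eq_smul_one]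
  have husum : (2*Real.sqrt β) • (1:A) ≤ u + star u := by
    rw [hueq] at hcfc
    exact sub_nonneg.mp hcfc
  -- conclude
  have hfin : star (u - 1) * (u - 1) = (2:ℝ) • (1:A) - (u + star u) := by
    rw [star_sub, star_one, sub_mul, mul_sub, mul_sub, hu1]
    simp only [one_mul, mul_one]
    rw [show ((2:ℝ) • (1:A)) = 1 + 1 by rw [two_smul]]
    abel
  have hposd : (0:A) ≤ (2:ℝ) • (1:A) - (u + star u) := hfin ▸ star_mul_self_nonneg (u - 1)
  have hled : (2:ℝ) • (1:A) - (u + star u) ≤ (2 - 2*Real.sqrt β) • (1:A) := by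
    calc (2:ℝ) • (1:A) - (u + star u) ≤ (2:ℝ) • (1:A) - (2*Real.sqrt β) • (1:A) :=
          sub_le_sub_left husum _
    _ = (2 - 2*Real.sqrt β) • (1:A) := by rw [sub_smul]
  have hn2 : ‖u - 1‖ * ‖u - 1‖ ≤ 2 - 2*Real.sqrt β := by
    rw [← CStarRing.norm_star_mul_self, hfin]
    calc ‖(2:ℝ) • (1:A) - (u + star u)‖ ≤ ‖(2 - 2*Real.sqrt β) • (1:A)‖ :=
          CStarAlgebra.norm_le_norm_of_nonneg_of_le hposd hled
    _ = |2 - 2*Real.sqrt β| * ‖(1:A)‖ := by rw [norm_smul, Real.norm_eq_abs]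
    _ = 2 - 2*Real.sqrt β := by rw [norm_one, mul_one, abs_of_nonneg (by linarith)]
  calc ‖u - 1‖ = Real.sqrt (‖u-1‖^2) := (Real.sqrt_sq (norm_nonneg _)).symm
  _ ≤ Real.sqrt (2*ε^2) := Real.sqrt_le_sqrt (by nlinarith)
  _ = Real.sqrt 2 * ε := by rw [Real.sqrt_mul (by norm_num), Real.sqrt_sq hε0]
end

section
/- Let C ⊆ D be unital C*-algebras with a finite-index conditional expectation E_C^D : D → C, and let A be an intermediate C*-subalgebra C ⊆ A ⊆ D with a conditional expectation E_A^D : D → A satisfying E_C^A ∘ E_A^D = E_C^D, where E_C^A = E_C^D|_A. If {u₁,…,u_N} is a quasi-basis for E_C^D, then {E_A^D(u₁),…,E_A^D(u_N)} is a quasi-basis for E_C^A : A → C; in particular E_C^A is of finite index. Moreover if each u_i lies in the unit ball of D, then each E_A^D(u_i) lies in the unit ball of A. -/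
/-- A conditional expectation of a C*-algebra `D` onto a C*-subalgebra `A` (given as a subset):
a contractive positive `A`-bimodule projection of `D` onto `A`.  Positivity is expressed by
saying that the image of a positive element is positive, i.e. of the form `y* y`. -/
structure ConditionalExpectation (D : Type*) [NonUnitalNormedRing D] [StarRing D]
    [Module ℂ D] (A : Set D) where
  toFun : D →ₗ[ℂ] D
  mem_range : ∀ x, toFun x ∈ A
  map_fix : ∀ a ∈ A, toFun a = a
  map_mul_left : ∀ a ∈ A, ∀ x, toFun (a * x) = a * toFun x
  map_mul_right : ∀ a ∈ A, ∀ x, toFun (x * a) = toFun x * a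
  contractive : ∀ x, ‖toFun x‖ ≤ ‖x‖
  pos : ∀ x, ∃ y, toFun (star x * x) = star y * y

/-- `u : Fin N → D` is a quasi-basis for the conditional expectation `E`:
`b = ∑ i, u i * E (u i * b)` for every `b`. -/
def IsQuasiBasis {D : Type*} [NonUnitalNormedRing D] [StarRing D] [Module ℂ D]
    {A : Set D} (E : ConditionalExpectation D A) {N : ℕ} (u : Fin N → D) : Prop :=
  ∀ b : D, b = ∑ i, u i * E.toFun (star (u i) * b)



section Decomp
variable {D : Type*} [CStarAlgebra D] [PartialOrder D] [StarOrderedRing D]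

lemma my_decomp (a : D) (ha : IsSelfAdjoint a) : ∃ y z : D, a = star y * y - star z * z := by
  refine ⟨CFC.sqrt a⁺, CFC.sqrt a⁻, ?_⟩
  have h1 : IsSelfAdjoint (CFC.sqrt a⁺) := IsSelfAdjoint.of_nonneg (CFC.sqrt_nonneg _)
  have h2 : IsSelfAdjoint (CFC.sqrt a⁻) := IsSelfAdjoint.of_nonneg (CFC.sqrt_nonneg _)
  rw [h1.star_eq, h2.star_eq, CFC.sqrt_mul_sqrt_self _ (CFC.posPart_nonneg a),
    CFC.sqrt_mul_sqrt_self _ (CFC.negPart_nonneg a), CFC.posPart_sub_negPart a ha]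

end Decomp

open ComplexStarModule in
lemma CE_star {D : Type*} [NormedRing D] [StarRing D] [CStarRing D]
    [NormedAlgebra ℂ D] [StarModule ℂ D] [CompleteSpace D]
    {A : Set D} (E : ConditionalExpectation D A) (x : D) :
    E.toFun (star x) = star (E.toFun x) := by
  letI : CStarAlgebra D := {}
  letI : PartialOrder D := CStarAlgebra.spectralOrder D
  haveI : StarOrderedRing D := CStarAlgebra.spectralOrderedRing D
  have hsa : ∀ h : D, IsSelfAdjoint h → IsSelfAdjoint (E.toFun h) := by
    intro h hh
    obtain ⟨y, z, rfl⟩ := my_decomp h hh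
    obtain ⟨y', hy'⟩ := E.pos y
    obtain ⟨z', hz'⟩ := E.pos z
    rw [map_sub, hy', hz']
    exact (IsSelfAdjoint.star_mul_self y').sub (IsSelfAdjoint.star_mul_self z')
  have key : ∀ r i : D, IsSelfAdjoint r → IsSelfAdjoint i →
      E.toFun (star (r + Complex.I • i)) = star (E.toFun (r + Complex.I • i)) := by
    intro r i hr hi
    have hst : star (r + Complex.I • i) = r - Complex.I • i := by
      rw [star_add, star_smul, hr.star_eq, hi.star_eq]
      simp [sub_eq_add_neg]
    rw [hst, map_sub, map_smul, map_add, map_smul, star_add, star_smul,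
      (hsa r hr).star_eq, (hsa i hi).star_eq]
    simp [sub_eq_add_neg]
  calc E.toFun (star x)
      = E.toFun (star ((↑(ℜ x) : D) + Complex.I • (↑(ℑ x) : D))) := by
        rw [realPart_add_I_smul_imaginaryPart]
    _ = star (E.toFun ((↑(ℜ x) : D) + Complex.I • (↑(ℑ x) : D))) := key _ _ (ℜ x).2 (ℑ x).2
    _ = star (E.toFun x) := by rw [realPart_add_I_smul_imaginaryPart]

/-- If `C ⊆ A ⊆ D` with a finite-index conditional expectation `E_C^D` with quasi-basis
`{u i}`, and `E_A^D : D → A` is a compatible conditional expectation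
(`E_C^A ∘ E_A^D = E_C^D` where `E_C^A = E_C^D|_A`), then `{E_A^D (u i)}` is a quasi-basis for
`E_C^A : A → C`; moreover if each `u i` is in the unit ball of `D` then each `E_A^D (u i)` is
in the unit ball of `A`. -/
theorem stmt5 {D : Type*} [NormedRing D] [StarRing D] [CStarRing D]
    [NormedAlgebra ℂ D] [StarModule ℂ D] [CompleteSpace D]
    (C A : StarSubalgebra ℂ D) (hCA : C ≤ A)
    (ECD : ConditionalExpectation D (C : Set D))
    (EAD : ConditionalExpectation D (A : Set D))
    (hcompat : ∀ x : D, ECD.toFun (EAD.toFun x) = ECD.toFun x)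
    {N : ℕ} (u : Fin N → D) (hu : IsQuasiBasis ECD u) :
    (∀ i, EAD.toFun (u i) ∈ A) ∧
    (∀ a ∈ A, a = ∑ i, EAD.toFun (u i) * ECD.toFun (star (EAD.toFun (u i)) * a)) ∧
    (∀ i, ‖u i‖ ≤ 1 → ‖EAD.toFun (u i)‖ ≤ 1) := by
  refine ⟨fun i => EAD.mem_range _, ?_, fun i hi => le_trans (EAD.contractive _) hi⟩
  intro a ha
  have step : ∀ i, ECD.toFun (star (EAD.toFun (u i)) * a) = ECD.toFun (star (u i) * a) := by
    intro i
    rw [← CE_star EAD (u i), ← EAD.map_mul_right a ha (star (u i))]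
    exact hcompat _
  calc a = EAD.toFun a := (EAD.map_fix a ha).symm
    _ = EAD.toFun (∑ i, u i * ECD.toFun (star (u i) * a)) := by rw [← hu a]
    _ = ∑ i, EAD.toFun (u i * ECD.toFun (star (u i) * a)) := map_sum EAD.toFun _ _
    _ = ∑ i, EAD.toFun (u i) * ECD.toFun (star (u i) * a) := by
        refine Finset.sum_congr rfl fun i _ => ?_
        exact EAD.map_mul_right _ (hCA (ECD.mem_range _)) (u i)
    _ = ∑ i, EAD.toFun (u i) * ECD.toFun (star (EAD.toFun (u i)) * a) := by
        simp_rw [step]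
end

section
/- Let C ⊆ D be unital C*-algebras with a faithful conditional expectation E_C^D : D → C of finite index, and let A be an intermediate C*-subalgebra with a conditional expectation E_A^D : D → A satisfying E_C^A ∘ E_A^D = E_C^D with E_C^A = E_C^D|_A. If F_A^D : D → A is another conditional expectation satisfying E_C^A ∘ F_A^D = E_C^D, then F_A^D = E_A^D. -/
/-- Uniqueness of the compatible conditional expectation: if `E_C^D : D → C` is a faithful
conditional expectation of finite index and `E_A^D, F_A^D : D → A` are conditional
expectations onto an intermediate subalgebra `A` both satisfying the compatibility condition
`(E_C^D|_A) ∘ E = E_C^D`, then they coincide. -/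
theorem stmt6 {D : Type*} [NormedRing D] [StarRing D] [CStarRing D]
    [NormedAlgebra ℂ D] [StarModule ℂ D] [CompleteSpace D]
    (C A : StarSubalgebra ℂ D) (hCA : C ≤ A)
    (ECD : ConditionalExpectation D (C : Set D))
    (hfaithful : ∀ x : D, ECD.toFun (star x * x) = 0 → x = 0)
    (hfin : ∃ (N : ℕ) (u : Fin N → D), IsQuasiBasis ECD u)
    (EAD FAD : ConditionalExpectation D (A : Set D))
    (hE : ∀ x : D, ECD.toFun (EAD.toFun x) = ECD.toFun x)
    (hF : ∀ x : D, ECD.toFun (FAD.toFun x) = ECD.toFun x) :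
    ∀ x : D, FAD.toFun x = EAD.toFun x := by
  intro x
  set g := FAD.toFun x - EAD.toFun x with hg
  have hgA : g ∈ (A : Set D) := A.sub_mem (FAD.mem_range x) (EAD.mem_range x)
  have hsgA : star g ∈ (A : Set D) := star_mem hgA
  have key : ECD.toFun (star g * g) = 0 := by
    have h1 : star g * g = FAD.toFun (star g * x) - EAD.toFun (star g * x) := by
      rw [FAD.map_mul_left _ hsgA, EAD.map_mul_left _ hsgA, hg, mul_sub]
    rw [h1, map_sub, hF, hE, sub_self]
  have h0 := hfaithful g key
  exact sub_eq_zero.mp (hg ▸ h0)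
end

section
/- Let D = C([0,1], M₂(ℂ)) and let A = { f ∈ D : f(1/2) ∈ ℂ·I }. Then there is no conditional expectation from D onto A. -/
open scoped Matrix.Norms.L2Operator

/-- There is no conditional expectation from `D = C([0,1], M₂(ℂ))` onto the intermediate
subalgebra `A = {f ∈ D : f(1/2) ∈ ℂ·1}`. -/
theorem stmt7 :
    ¬ Nonempty (ConditionalExpectation
      C(Set.Icc (0:ℝ) 1, Matrix (Fin 2) (Fin 2) ℂ)
      {f : C(Set.Icc (0:ℝ) 1, Matrix (Fin 2) (Fin 2) ℂ) |
        ∃ c : ℂ, f ⟨1/2, by norm_num⟩ = c • (1 : Matrix (Fin 2) (Fin 2) ℂ)}) := by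
  rintro ⟨E⟩
  set p : Set.Icc (0:ℝ) 1 := ⟨1/2, by norm_num⟩ with hp
  set M : Matrix (Fin 2) (Fin 2) ℂ := Matrix.single 0 1 1 with hM
  set x : C(Set.Icc (0:ℝ) 1, Matrix (Fin 2) (Fin 2) ℂ) := ContinuousMap.const _ M with hx
  have key : ∀ t : Set.Icc (0:ℝ) 1, t ≠ p → E.toFun x t = M := by
    intro t ht
    have htR : ((t : ℝ) - 1/2) ≠ 0 := by
      intro h
      apply ht
      apply Subtype.ext
      simp only [hp]
      linarith [sub_eq_zero.mp h]
    set a : C(Set.Icc (0:ℝ) 1, Matrix (Fin 2) (Fin 2) ℂ) :=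
      ⟨fun s => ((((s : ℝ) - 1/2) / ((t : ℝ) - 1/2) : ℝ) : ℂ) • 1, by fun_prop⟩ with ha
    have haA : a ∈ {f : C(Set.Icc (0:ℝ) 1, Matrix (Fin 2) (Fin 2) ℂ) |
        ∃ c : ℂ, f p = c • (1 : Matrix (Fin 2) (Fin 2) ℂ)} := by
      refine ⟨0, ?_⟩
      simp [ha, hp]
    have haxA : a * x ∈ {f : C(Set.Icc (0:ℝ) 1, Matrix (Fin 2) (Fin 2) ℂ) |
        ∃ c : ℂ, f p = c • (1 : Matrix (Fin 2) (Fin 2) ℂ)} := by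
      refine ⟨0, ?_⟩
      simp [ha, hp, ContinuousMap.mul_apply]
    have h1 := E.map_fix (a * x) haxA
    have h2 := E.map_mul_left a haA x
    have h3 : a * x = a * E.toFun x := h2 ▸ h1.symm
    have h4 := congrFun (congrArg DFunLike.coe h3) t
    have hat : a t = 1 := by
      simp only [ha, ContinuousMap.coe_mk]
      rw [div_self htR, Complex.ofReal_one, one_smul]
    simp only [ContinuousMap.mul_apply, hat, one_mul] at h4
    simpa [hx] using h4.symm
  have heq : E.toFun x = x := by
    apply ContinuousMap.ext
    have hd : Dense {t : Set.Icc (0:ℝ) 1 | t ≠ p} := by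
      exact (dense_compl_singleton p).mono (fun t ht => ht)
    have := Continuous.ext_on hd (E.toFun x).continuous x.continuous
      (fun t ht => by simpa [hx] using key t ht)
    exact fun t => congrFun this t
  obtain ⟨c, hc⟩ := E.mem_range x
  rw [heq] at hc
  have hcc : M 0 1 = (c • (1 : Matrix (Fin 2) (Fin 2) ℂ)) 0 1 := by
    rw [← hc]; rfl
  simp [hM, Matrix.one_apply] at hcc
end

section
/- Let E : B → A be a conditional expectation of finite index with quasi-basis {u₁,…,u_N}. Then Index E := Σᵢ uᵢuᵢ* is independent of the choice of quasi-basis. -/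
/-- In a unital C*-algebra, every selfadjoint element is a difference of two positives. -/
lemma selfAdjoint_eq_sub {B : Type*} [NormedRing B] [StarRing B] [CStarRing B]
    [NormedAlgebra ℂ B] [StarModule ℂ B] [CompleteSpace B] (a : B) (ha : IsSelfAdjoint a) :
    ∃ y z : B, a = star y * y - star z * z := by
  let _ : CStarAlgebra B := { }
  let _ := CStarAlgebra.spectralOrder B
  have _ := CStarAlgebra.spectralOrderedRing B
  have h1 : (0:B) ≤ (2:ℝ)⁻¹ • (algebraMap ℝ B ‖a‖ - a) := by
    refine smul_nonneg (by norm_num) ?_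
    rw [sub_nonneg]; exact ha.le_algebraMap_norm_self
  have h2 : (0:B) ≤ (2:ℝ)⁻¹ • (algebraMap ℝ B ‖a‖ + a) := by
    refine smul_nonneg (by norm_num) ?_
    rw [← sub_neg_eq_add, sub_nonneg]; exact neg_le.mpr ha.neg_algebraMap_norm_le_self
  refine ⟨CFC.sqrt ((2:ℝ)⁻¹ • (algebraMap ℝ B ‖a‖ + a)),
    CFC.sqrt ((2:ℝ)⁻¹ • (algebraMap ℝ B ‖a‖ - a)), ?_⟩
  have s1 : (0:B) ≤ CFC.sqrt ((2:ℝ)⁻¹ • (algebraMap ℝ B ‖a‖ + a)) := CFC.sqrt_nonneg _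
  have s2 : (0:B) ≤ CFC.sqrt ((2:ℝ)⁻¹ • (algebraMap ℝ B ‖a‖ - a)) := CFC.sqrt_nonneg _
  rw [(IsSelfAdjoint.of_nonneg s1).star_eq, (IsSelfAdjoint.of_nonneg s2).star_eq,
    CFC.sqrt_mul_sqrt_self _ h2, CFC.sqrt_mul_sqrt_self _ h1, smul_sub, smul_add]
  module

lemma condexp_star {B : Type*} [NormedRing B] [StarRing B] [CStarRing B]
    [NormedAlgebra ℂ B] [StarModule ℂ B] [CompleteSpace B]
    {A : Set B} (E : ConditionalExpectation B A) (x : B) :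
    E.toFun (star x) = star (E.toFun x) := by
  have Esa : ∀ a : B, IsSelfAdjoint a → IsSelfAdjoint (E.toFun a) := by
    intro a ha
    obtain ⟨y, z, rfl⟩ := selfAdjoint_eq_sub a ha
    rw [map_sub]
    obtain ⟨c, hc⟩ := E.pos y
    obtain ⟨d, hd⟩ := E.pos z
    rw [hc, hd]
    exact (IsSelfAdjoint.star_mul_self c).sub (IsSelfAdjoint.star_mul_self d)
  have key : ∀ p q : B, IsSelfAdjoint p → IsSelfAdjoint q →
      E.toFun (p - Complex.I • q) = star (E.toFun (p + Complex.I • q)) := by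
    intro p q hp hq
    rw [map_sub, map_smul, map_add, map_smul, star_add, star_smul,
      (Esa p hp).star_eq, (Esa q hq).star_eq, Complex.star_def, Complex.conj_I,
      neg_smul, ← sub_eq_add_neg]
  have hp : IsSelfAdjoint ((2:ℂ)⁻¹ • (x + star x)) := by
    rw [IsSelfAdjoint, star_smul, star_add, star_star, add_comm]
    congr 1
    simp [Complex.ext_iff]
  have hq : IsSelfAdjoint ((2:ℂ)⁻¹ • (Complex.I • (star x - x))) := by
    rw [IsSelfAdjoint, star_smul, star_smul, star_sub, star_star, Complex.star_def,
      Complex.conj_I, neg_smul, ← smul_neg, neg_sub]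
    congr 1
    simp [Complex.ext_iff]
  have hIk : Complex.I • ((2:ℂ)⁻¹ • (Complex.I • (star x - x)))
      = (2:ℂ)⁻¹ • (x - star x) := by
    rw [smul_comm Complex.I ((2:ℂ)⁻¹), smul_smul Complex.I Complex.I, Complex.I_mul_I, neg_one_smul, neg_sub]
  have hx : x = (2:ℂ)⁻¹ • (x + star x)
      + Complex.I • ((2:ℂ)⁻¹ • (Complex.I • (star x - x))) := by
    rw [hIk]; module
  have hsx : star x = (2:ℂ)⁻¹ • (x + star x)
      - Complex.I • ((2:ℂ)⁻¹ • (Complex.I • (star x - x))) := by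
    rw [hIk]; module
  rw [hsx, key _ _ hp hq, ← hx]

/-- The index `Index E = ∑ i, u i * (u i)*` of a finite-index conditional expectation does not
depend on the choice of quasi-basis. -/
theorem stmt11 {B : Type*} [NormedRing B] [StarRing B] [CStarRing B]
    [NormedAlgebra ℂ B] [StarModule ℂ B] [CompleteSpace B]
    (A : StarSubalgebra ℂ B) (E : ConditionalExpectation B (A : Set B))
    {N M : ℕ} (u : Fin N → B) (w : Fin M → B)
    (hu : IsQuasiBasis E u) (hw : IsQuasiBasis E w) :
    ∑ i, u i * star (u i) = ∑ j, w j * star (w j) := by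
  calc ∑ i, u i * star (u i)
      = ∑ i, (∑ j, w j * E.toFun (star (w j) * u i)) * star (u i) := by
        refine Finset.sum_congr rfl fun i _ => ?_
        rw [← hw (u i)]
    _ = ∑ j, w j * (∑ i, E.toFun (star (w j) * u i) * star (u i)) := by
        simp_rw [Finset.sum_mul, mul_assoc, Finset.mul_sum]
        exact Finset.sum_comm
    _ = ∑ j, w j * star (w j) := by
        refine Finset.sum_congr rfl fun j _ => ?_
        congr 1
        calc ∑ i, E.toFun (star (w j) * u i) * star (u i)
            = ∑ i, star (u i * E.toFun (star (u i) * w j)) := by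
              refine Finset.sum_congr rfl fun i _ => ?_
              rw [star_mul]
              congr 1
              rw [← condexp_star]
              congr 1
              rw [star_mul, star_star]
          _ = star (∑ i, u i * E.toFun (star (u i) * w j)) := by rw [star_sum]
          _ = star (w j) := by rw [← hu (w j)]
end

section
/- Let E : B → A be a conditional expectation of finite index with quasi-basis {u₁,…,u_N}. Then Index E = Σᵢ uᵢuᵢ* lies in the center of B. -/
section Aux

variable {B : Type*} [NormedRing B] [StarRing B] [NormedAlgebra ℂ B] [StarModule ℂ B]

private theorem polar_aux (x : B) :
    (4:ℂ) • x = star (x+1)*(x+1) - star (x-1)*(x-1)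
      + Complex.I • (star (x + Complex.I • 1) * (x + Complex.I • 1)
        - star (x - Complex.I • 1) * (x - Complex.I • 1)) := by
  simp only [star_add, star_sub, star_smul, Complex.star_def, Complex.conj_I, star_one, add_mul,
    mul_add, sub_mul, mul_sub, neg_mul, mul_neg, smul_neg, neg_smul, smul_sub, smul_add,
    mul_smul_comm, smul_mul_assoc, smul_smul, mul_one, one_mul, one_smul, Complex.I_mul_I]
  module

private theorem smul4_star (x : B) : (4:ℂ) • star x = star ((4:ℂ) • x) := by
  rw [star_smul]; norm_num

private theorem star_comb {a b c d : B} (ha : star a = a) (hb : star b = b)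
    (hc : star c = c) (hd : star d = d) :
    star (a - b + Complex.I • (c - d)) = a - b + -(Complex.I • (c - d)) := by
  rw [star_add, star_sub, ha, hb, star_smul, star_sub, hc, hd, Complex.star_def,
    Complex.conj_I, neg_smul]

private theorem E_star {A : Set B} (E : ConditionalExpectation B A) (x : B) :
    E.toFun (star x) = star (E.toFun x) := by
  have hS : ∀ c : B, star (star c * c) = star c * c := fun c => IsSelfAdjoint.star_mul_self c
  have hsa : ∀ c : B, star (E.toFun (star c * c)) = E.toFun (star c * c) := by
    intro c
    obtain ⟨y, hy⟩ := E.pos c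
    rw [hy]
    exact IsSelfAdjoint.star_mul_self y
  have key : (4:ℂ) • E.toFun x
      = E.toFun (star (x+1)*(x+1)) - E.toFun (star (x-1)*(x-1))
      + Complex.I • (E.toFun (star (x + Complex.I • 1) * (x + Complex.I • 1))
        - E.toFun (star (x - Complex.I • 1) * (x - Complex.I • 1))) := by
    simpa only [map_smul, map_sub, map_add] using congrArg E.toFun (polar_aux x)
  have hstar4 : (4:ℂ) • star x
      = (star (x+1)*(x+1) - star (x-1)*(x-1))
      + -(Complex.I • (star (x + Complex.I • 1) * (x + Complex.I • 1)
        - star (x - Complex.I • 1) * (x - Complex.I • 1))) := by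
    rw [smul4_star, polar_aux x, star_comb (hS _) (hS _) (hS _) (hS _)]
  have hL : (4:ℂ) • E.toFun (star x)
      = (E.toFun (star (x+1)*(x+1)) - E.toFun (star (x-1)*(x-1)))
      + -(Complex.I • (E.toFun (star (x + Complex.I • 1) * (x + Complex.I • 1))
        - E.toFun (star (x - Complex.I • 1) * (x - Complex.I • 1)))) := by
    rw [← map_smul, hstar4]
    simp only [map_add, map_sub, map_neg, map_smul]
  have hR : (4:ℂ) • star (E.toFun x)
      = (E.toFun (star (x+1)*(x+1)) - E.toFun (star (x-1)*(x-1)))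
      + -(Complex.I • (E.toFun (star (x + Complex.I • 1) * (x + Complex.I • 1))
        - E.toFun (star (x - Complex.I • 1) * (x - Complex.I • 1)))) := by
    rw [smul4_star, key, star_comb (hsa _) (hsa _) (hsa _) (hsa _)]
  have h := hL.trans hR.symm
  exact smul_right_injective B (by norm_num : (4:ℂ) ≠ 0) h

end Aux

/-- The index `Index E = ∑ i, u i * (u i)*` of a finite-index conditional expectation lies in
the center of `B`. -/
theorem stmt12 {B : Type*} [NormedRing B] [StarRing B] [CStarRing B]
    [NormedAlgebra ℂ B] [StarModule ℂ B] [CompleteSpace B]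
    (A : StarSubalgebra ℂ B) (E : ConditionalExpectation B (A : Set B))
    {N : ℕ} (u : Fin N → B) (hu : IsQuasiBasis E u) :
    (∑ i, u i * star (u i)) ∈ Set.center B := by
  -- right-handed quasi-basis identity
  have hu' : ∀ b : B, b = ∑ i, E.toFun (b * u i) * star (u i) := by
    intro b
    have h := congrArg (star ·) (hu (star b))
    simp only [star_sum, star_mul, star_star, ← E_star] at h
    exact h
  rw [Semigroup.mem_center_iff]
  intro b
  calc b * ∑ i, u i * star (u i)
      = ∑ i, (b * u i) * star (u i) := by
        rw [Finset.mul_sum]; exact Finset.sum_congr rfl fun i _ => by rw [mul_assoc]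
    _ = ∑ i, (∑ j, u j * E.toFun (star (u j) * (b * u i))) * star (u i) := by
        exact Finset.sum_congr rfl fun i _ => by rw [← hu (b * u i)]
    _ = ∑ i, ∑ j, u j * (E.toFun (star (u j) * b * u i) * star (u i)) := by
        refine Finset.sum_congr rfl fun i _ => ?_
        rw [Finset.sum_mul]
        exact Finset.sum_congr rfl fun j _ => by rw [mul_assoc, mul_assoc]
    _ = ∑ j, ∑ i, u j * (E.toFun (star (u j) * b * u i) * star (u i)) := Finset.sum_comm
    _ = ∑ j, u j * (star (u j) * b) := by
        refine Finset.sum_congr rfl fun j _ => ?_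
        rw [← Finset.mul_sum, ← hu' (star (u j) * b)]
    _ = (∑ i, u i * star (u i)) * b := by
        rw [Finset.sum_mul]
        exact Finset.sum_congr rfl fun j _ => by rw [mul_assoc]
end

section
/- Let E : B → A be a conditional expectation of finite index. Then Index E ≥ 1 (i.e., Index E − 1_B is a positive element); in particular Index E is a positive invertible element of B. -/
/-- For a conditional expectation of finite index, `Index E = ∑ i, u i * (u i)* ≥ 1`;
in particular `Index E` is a positive invertible element. -/
theorem stmt13 {B : Type*} [NormedRing B] [StarRing B] [CStarRing B]
    [NormedAlgebra ℂ B] [StarModule ℂ B] [CompleteSpace B]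
    [PartialOrder B] [StarOrderedRing B]
    (A : StarSubalgebra ℂ B) (E : ConditionalExpectation B (A : Set B))
    {N : ℕ} (u : Fin N → B) (hu : IsQuasiBasis E u) :
    1 ≤ ∑ i, u i * star (u i) ∧ IsUnit (∑ i, u i * star (u i)) := by
  set a : Fin N → B := fun i => E.toFun (star (u i)) with ha
  have hmem : ∀ i, a i ∈ A := fun i => E.mem_range _
  have h1A : (1 : B) ∈ A := A.one_mem
  have hE1 : E.toFun 1 = 1 := E.map_fix 1 h1A
  have h1 : (1 : B) = ∑ i, u i * a i := by
    simpa [mul_one] using hu 1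
  -- ∑ star (a i) * a i = 1
  have h2 : ∑ i, star (a i) * a i = 1 := by
    have key : ∀ i, star (a i) * a i = E.toFun (star (a i) * star (u i)) := fun i => by
      rw [E.map_mul_left _ (star_mem (hmem i))]
    calc ∑ i, star (a i) * a i = E.toFun (∑ i, star (a i) * star (u i)) := by
          rw [map_sum]; exact Finset.sum_congr rfl fun i _ => key i
      _ = E.toFun (star (∑ i, u i * a i)) := by
          rw [star_sum]; simp [star_mul]
      _ = 1 := by rw [← h1, star_one, hE1]
  -- expansion of ∑ w i * star (w i), w i = u i - star (a i)
  have hexp : ∑ i, (u i - star (a i)) * star (u i - star (a i))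
      = (∑ i, u i * star (u i)) - 1 := by
    have : ∀ i, (u i - star (a i)) * star (u i - star (a i))
        = u i * star (u i) - u i * a i - star (a i) * star (u i) + star (a i) * a i := by
      intro i; simp only [star_sub, star_star, mul_sub, sub_mul]; abel
    rw [Finset.sum_congr rfl fun i _ => this i]
    simp only [Finset.sum_add_distrib, Finset.sum_sub_distrib, h2, ← h1]
    have h1' : ∑ i, star (a i) * star (u i) = 1 := by
      have := congrArg star h1
      simpa [star_sum, star_mul] using this.symm
    rw [h1']
    abel
  have hpos : (0 : B) ≤ (∑ i, u i * star (u i)) - 1 := by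
    rw [← hexp]
    refine Finset.sum_nonneg fun i _ => ?_
    simpa using star_mul_self_nonneg (star (u i - star (a i)))
  have hle : (1 : B) ≤ ∑ i, u i * star (u i) := by
    have := add_le_add_left hpos 1
    simpa using this
  letI : CStarAlgebra B := { }
  exact ⟨hle, CStarAlgebra.isUnit_of_le 1 hle isStrictlyPositive_one⟩
end

section
/- Let E : B → A be a conditional expectation of finite index with ‖Index E‖ = c. Then for every x ∈ B, E(x*x) ≥ c^{-1} x*x (Pimsner–Popa inequality). -/
/-- The Pimsner–Popa inequality: if `E : B → A` has finite index with
`c = ‖Index E‖ = ‖∑ i, u i * (u i)*‖`, then `E(x* x) ≥ c⁻¹ (x* x)` for every `x`. -/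
theorem stmt15 {B : Type*} [NormedRing B] [StarRing B] [CStarRing B]
    [NormedAlgebra ℂ B] [StarModule ℂ B] [CompleteSpace B]
    [PartialOrder B] [StarOrderedRing B]
    (A : StarSubalgebra ℂ B) (E : ConditionalExpectation B (A : Set B))
    {N : ℕ} (u : Fin N → B) (hu : IsQuasiBasis E u)
    (c : ℝ) (hc : c = ‖∑ i, u i * star (u i)‖) :
    ∀ x : B, c⁻¹ • (star x * x) ≤ E.toFun (star x * x) := by
  letI : CStarAlgebra B := ⟨⟩
  intro x
  set a : Fin N → B := fun i => E.toFun (star (u i) * x) with ha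
  have hx : x = ∑ i, u i * a i := hu x
  have hxs : star x = ∑ i, star (a i) * star (u i) := by
    conv_lhs => rw [hx]
    rw [star_sum]
    exact Finset.sum_congr rfl fun i _ => star_mul _ _
  -- E(x*x) = ∑ aᵢ* aᵢ
  have hE : E.toFun (star x * x) = ∑ i, star (a i) * a i := by
    have h1 : star x * x = ∑ i, star (a i) * (star (u i) * x) := by
      conv_lhs => rw [hxs, Finset.sum_mul]
      exact Finset.sum_congr rfl fun i _ => mul_assoc _ _ _
    rw [h1, map_sum]
    refine Finset.sum_congr rfl fun i _ => ?_
    rw [E.map_mul_left (star (a i)) (star_mem (E.mem_range _)) (star (u i) * x)]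
  have he0 : (0:B) ≤ E.toFun (star x * x) := by
    rw [hE]; exact Finset.sum_nonneg fun i _ => star_mul_self_nonneg _
  have hs0 : (0:B) ≤ ∑ i, u i * star (u i) :=
    Finset.sum_nonneg fun i _ => mul_star_self_nonneg _
  -- the Cauchy–Schwarz positivity, expanded
  have hP : (0:B) ≤ (star x * (∑ i, u i * star (u i)) * x - c • (star x * x))
      - (c • (star x * x) - (c*c) • E.toFun (star x * x)) := by
    have hP0 : (0:B) ≤ ∑ i, star (star (u i) * x - c • a i) * (star (u i) * x - c • a i) :=
      Finset.sum_nonneg fun i _ => star_mul_self_nonneg _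
    have e1 : ∀ i : Fin N, star (star (u i) * x - c • a i) * (star (u i) * x - c • a i)
        = (star x * (u i * (star (u i) * x)) - c • (star x * (u i * a i)))
          - (c • (star (a i) * (star (u i) * x)) - (c*c) • (star (a i) * a i)) := by
      intro i
      rw [star_sub, star_mul, star_star, star_smul, sub_mul, mul_sub, mul_sub]
      simp only [star_trivial]
      simp only [mul_smul_comm, smul_mul_assoc, smul_smul, mul_assoc]
    rw [Finset.sum_congr rfl fun i _ => e1 i, Finset.sum_sub_distrib,
      Finset.sum_sub_distrib, Finset.sum_sub_distrib] at hP0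
    have hT1 : ∑ i, star x * (u i * (star (u i) * x))
        = star x * (∑ i, u i * star (u i)) * x := by
      rw [← Finset.mul_sum, mul_assoc, Finset.sum_mul]
      exact congrArg _ (Finset.sum_congr rfl fun i _ => (mul_assoc _ _ _).symm)
    have hT2 : ∑ i, c • (star x * (u i * a i)) = c • (star x * x) := by
      rw [← Finset.smul_sum, ← Finset.mul_sum, ← hx]
    have hT3 : ∑ i, c • (star (a i) * (star (u i) * x)) = c • (star x * x) := by
      rw [← Finset.smul_sum]
      congr 1
      conv_rhs => rw [hxs, Finset.sum_mul]
      exact Finset.sum_congr rfl fun i _ => (mul_assoc _ _ _).symm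
    have hT4 : ∑ i, (c*c) • (star (a i) * a i) = (c*c) • E.toFun (star x * x) := by
      rw [← Finset.smul_sum, hE]
    rwa [hT1, hT2, hT3, hT4] at hP0
  -- x* s x ≤ c • x* x
  have h1 : star x * (∑ i, u i * star (u i)) * x ≤ c • (star x * x) := by
    have hsa : IsSelfAdjoint (∑ i, u i * star (u i)) := IsSelfAdjoint.of_nonneg hs0
    have hs1 : (∑ i, u i * star (u i)) ≤ algebraMap ℝ B c := by
      rw [hc]; exact hsa.le_algebraMap_norm_self
    calc star x * (∑ i, u i * star (u i)) * x
        ≤ star x * algebraMap ℝ B c * x := star_left_conjugate_le_conjugate hs1 x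
      _ = c • (star x * x) := by
          rw [Algebra.algebraMap_eq_smul_one, mul_smul_comm, mul_one, smul_mul_assoc]
  have key : c • (star x * x) ≤ (c*c) • E.toFun (star x * x) := by
    have h2 : c • (star x * x) + (c • (star x * x) - (c*c) • E.toFun (star x * x))
        ≤ star x * (∑ i, u i * star (u i)) * x := by
      rw [← sub_nonneg]
      convert hP using 1
      abel
    have h3 : c • (star x * x) + (c • (star x * x) - (c*c) • E.toFun (star x * x))
        ≤ c • (star x * x) + 0 := by
      rw [add_zero]; exact h2.trans h1
    have h4 := le_of_add_le_add_left h3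
    rwa [sub_nonpos] at h4
  rcases eq_or_ne c 0 with h0 | h0
  · rw [h0, inv_zero, zero_smul]; exact he0
  · have hcpos : 0 < c := lt_of_le_of_ne (hc ▸ norm_nonneg _) (Ne.symm h0)
    have hcc : (0:ℝ) ≤ c⁻¹ * c⁻¹ := mul_nonneg (inv_nonneg.2 hcpos.le) (inv_nonneg.2 hcpos.le)
    have h5 := smul_le_smul_of_nonneg_left key hcc
    rw [smul_smul, smul_smul] at h5
    have e2 : c⁻¹ * c⁻¹ * c = c⁻¹ := by field_simp
    have e3 : c⁻¹ * c⁻¹ * (c * c) = 1 := by field_simp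
    rwa [e2, e3, one_smul] at h5
end
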